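/- The effective velocity of the travelling wave is a step function: with w̄ := ū - μ·(ln v̄)' where (v̄, ū) is the travelling wave profile extended by v̄ = 1, ū = u₋ on x ≤ 0, one has w̄(x) = u₊ for x > 0 and w̄(x) = u₋ for x < 0. -/

import Mathlib

/-!
On `(0, ∞)` the profile `v̄` is a logistic curve, so `log v̄` satisfies the logistic equation
`μ (log v̄)' = s (v₊ - v̄)`; hence `w̄ = u₋ + s - s v₊ = u₊` there, the last equality being the
choice of `s`. On `(-∞, 0)` the profile is constant, so `w̄ = ū = u₋`.
-/

open Real Filter Topology

noncomputable def logistic (a c r x : ℝ) : ℝ :=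
  a / (1 + c * exp (-r * a * x))

theorem hasDerivAt_log_logistic {a c : ℝ} (ha : a ≠ 0) (hc : 0 ≤ c) (r x : ℝ) :
    HasDerivAt (fun y => log (logistic a c r y)) (r * (a - logistic a c r x)) x := by
  have hD : 0 < 1 + c * exp (-r * a * x) := by positivity
  have hexp : HasDerivAt (fun y => exp (-r * a * y)) (exp (-r * a * x) * (-r * a)) x := by
    simpa using ((hasDerivAt_id x).const_mul (-r * a)).exp
  have hf : HasDerivAt (logistic a c r)
      ((0 * (1 + c * exp (-r * a * x)) - a * (c * (exp (-r * a * x) * (-r * a))))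
        / (1 + c * exp (-r * a * x)) ^ 2) x :=
    (hasDerivAt_const x a).div ((hexp.const_mul c).const_add 1) hD.ne'
  have hf0 : logistic a c r x ≠ 0 := div_ne_zero ha hD.ne'
  convert hf.log hf0 using 1
  simp only [logistic]
  field_simp
  ring

theorem effective_velocity_step_general (um up vp μ : ℝ) (hvp : 1 < vp)
    (hμ : 0 < μ)
    (s : ℝ) (hsdef : s = (um - up) / (vp - 1))
    (vb : ℝ → ℝ)
    (hvb : ∀ x, vb x = if x ≤ 0 then 1
        else vp / (1 + (vp - 1) * Real.exp (-s * vp * x / μ)))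
    (ub : ℝ → ℝ) (hub : ∀ x, ub x = um + s - s * vb x)
    (wb : ℝ → ℝ)
    (hwb : ∀ x, wb x = ub x - μ * deriv (fun y => Real.log (vb y)) x) :
    (∀ x > (0:ℝ), wb x = up) ∧ (∀ x < (0:ℝ), wb x = um) := by
  have hs : um + s - s * vp = up := by
    rw [hsdef]
    field_simp [(sub_pos.mpr hvp).ne']
    ring
  constructor
  · intro x hx
    have hv : vb =ᶠ[𝓝 x] logistic vp (vp - 1) (s / μ) := by
      filter_upwards [Ioi_mem_nhds hx] with y hy
      rw [hvb y, if_neg hy.not_ge, logistic]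
      field_simp
    have hlog : (fun y => log (vb y)) =ᶠ[𝓝 x] fun y => log (logistic vp (vp - 1) (s / μ) y) :=
      hv.fun_comp log
    rw [hwb, hub, hlog.deriv_eq,
      (hasDerivAt_log_logistic (by positivity) (by linarith) _ x).deriv, hv.eq_of_nhds]
    field_simp
    linear_combination hs
  · intro x hx
    have hlog : (fun y => log (vb y)) =ᶠ[𝓝 x] fun _ => 0 := by
      filter_upwards [Iio_mem_nhds hx] with y hy
      rw [hvb y, if_pos hy.le, log_one]
    rw [hwb, hub, hlog.deriv_eq, deriv_const, hvb, if_pos hx.le]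
    ring

/-- The effective velocity of the travelling wave is a step function. -/
theorem effective_velocity_step (um up vp μ : ℝ) (h : up < um) (hvp : 1 < vp)
    (hμ : 0 < μ)
    (s : ℝ) (hsdef : s = (um - up) / (vp - 1))
    (vb : ℝ → ℝ)
    (hvb : ∀ x, vb x = if x ≤ 0 then 1
        else vp / (1 + (vp - 1) * Real.exp (-s * vp * x / μ)))
    (ub : ℝ → ℝ) (hub : ∀ x, ub x = um + s - s * vb x)
    (wb : ℝ → ℝ)
    (hwb : ∀ x, wb x = ub x - μ * deriv (fun y => Real.log (vb y)) x) :
    (∀ x > (0:ℝ), wb x = up) ∧ (∀ x < (0:ℝ), wb x = um) :=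
  effective_velocity_step_general um up vp μ hvp hμ s hsdef vb hvb ub hub wb hwb
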